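/- Let A be a symmetric positive definite real m×m matrix, W an invertible n×n matrix, B an n×m matrix, F : [0,T] → ℝⁿ continuous, and C₀ ∈ ℝⁿ. Then there exists a unique continuously differentiable function C : [0,T] → ℝⁿ and a unique continuous function R : [0,T] → ℝᵐ satisfying W C'(t) + B R(t) = F(t), −Bᵀ C(t) + A R(t) = 0 for all t ∈ [0,T], and C(0) = C₀. -/

import Mathlib

/-!
Eliminating `R = A⁻¹ Bᵀ C` with the second equation turns the first into the linear ODE
`C' = -W⁻¹ B A⁻¹ Bᵀ C + W⁻¹ F`. After extending `F` continuously to all of `ℝ`, this ODE has the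
global solution given by variation of constants, and uniqueness follows from the Lipschitz
uniqueness theorem for ODEs, the right-hand side being affine in `C`.
-/

open Set Matrix

universe u v in
theorem ContinuousOn.exists_continuous_eqOn {X : Type u} {Y : Type v} [TopologicalSpace X]
    [NormalSpace X] [TopologicalSpace Y] [TietzeExtension.{u, v} Y] {s : Set X} (hs : IsClosed s)
    {f : X → Y} (hf : ContinuousOn f s) : ∃ g : X → Y, Continuous g ∧ EqOn g f s := by
  obtain ⟨g, hg⟩ := ContinuousMap.exists_restrict_eq hs ⟨s.domRestrict f, hf.domRestrict⟩
  exact ⟨g, g.continuous, fun x hx => congr($hg ⟨x, hx⟩)⟩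

section LinearODE

variable {E : Type*} [NormedAddCommGroup E] [NormedSpace ℝ E]

theorem exists_hasDerivAt_clm_apply_add [CompleteSpace E] (M : E →L[ℝ] E) {g : ℝ → E}
    (hg : Continuous g) (x₀ : E) :
    ∃ x : ℝ → E, x 0 = x₀ ∧ ∀ t, HasDerivAt x (M (x t) + g t) t := by
  let +nondep : NormedAlgebra ℚ (E →L[ℝ] E) := .restrictScalars ℚ ℝ _
  let U : ℝ → E →L[ℝ] E := fun t => NormedSpace.exp (t • M)
  have hU : ∀ t, HasDerivAt U (M * U t) t := hasDerivAt_exp_smul_const' M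
  have hU_inv : ∀ t w, U t (U (-t) w) = w := fun t w => by
    change (U t * U (-t)) w = w
    rw [← NormedSpace.exp_add_of_commute]
    · simp
    · exact ((Commute.refl M).smul_left t).smul_right (-t)
  have hint : Continuous fun s => U (-s) (g s) :=
    ((NormedSpace.exp_continuous.comp (continuous_id.smul continuous_const)).comp
      continuous_neg).clm_apply hg
  -- variation of constants: `x t = exp (t M) (x₀ + ∫₀ᵗ exp (-s M) (g s) ds)`
  refine ⟨fun t => U t (x₀ + ∫ s in (0 : ℝ)..t, U (-s) (g s)), by simp [U], fun t => ?_⟩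
  have := (hU t).clm_apply ((hint.integral_hasStrictDerivAt 0 t).hasDerivAt.const_add x₀)
  simpa [hU_inv] using this

theorem eqOn_Icc_of_hasDerivAt_clm_apply_add (M : E →L[ℝ] E) (g : ℝ → E) {a b : ℝ} {x y : ℝ → E}
    (hx : ∀ t ∈ Icc a b, HasDerivAt x (M (x t) + g t) t)
    (hy : ∀ t ∈ Icc a b, HasDerivAt y (M (y t) + g t) t) (ha : x a = y a) :
    EqOn x y (Icc a b) :=
  ODE_solution_unique (v := fun t z => M z + g t) (K := ‖M‖₊)
    (fun t => LipschitzWith.of_dist_le_mul fun z w => by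
      rw [dist_add_right]; exact M.lipschitz.dist_le_mul z w)
    (HasDerivAt.continuousOn hx) (fun t ht => (hx t (Ico_subset_Icc_self ht)).hasDerivWithinAt)
    (HasDerivAt.continuousOn hy) (fun t ht => (hy t (Ico_subset_Icc_self ht)).hasDerivWithinAt) ha

end LinearODE

theorem Matrix.eq_inv_mulVec_iff {ι K : Type*} [Fintype ι] [DecidableEq ι] [CommRing K]
    {A : Matrix ι ι K} (hA : IsUnit A) {u v : ι → K} : v = A⁻¹ *ᵥ u ↔ A *ᵥ v = u := by
  have hdet := (isUnit_iff_isUnit_det A).mp hA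
  constructor <;> rintro rfl
  · rw [mulVec_mulVec, mul_nonsing_inv A hdet, one_mulVec]
  · rw [mulVec_mulVec, nonsing_inv_mul A hdet, one_mulVec]

theorem Matrix.mixed_system_iff {ι κ K : Type*} [Fintype ι] [DecidableEq ι] [Fintype κ]
    [DecidableEq κ] [CommRing K] {A : Matrix κ κ K} {W : Matrix ι ι K} (hA : IsUnit A)
    (hW : IsUnit W) (B : Matrix ι κ K) {c d f : ι → K} {r : κ → K} :
    (W *ᵥ d + B *ᵥ r = f ∧ -(Bᵀ *ᵥ c) + A *ᵥ r = 0) ↔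
      d = -(W⁻¹ * B * (A⁻¹ * Bᵀ)) *ᵥ c + W⁻¹ *ᵥ f ∧ r = (A⁻¹ * Bᵀ) *ᵥ c := by
  have hAr : -(Bᵀ *ᵥ c) + A *ᵥ r = 0 ↔ r = (A⁻¹ * Bᵀ) *ᵥ c := by
    rw [← mulVec_mulVec, eq_inv_mulVec_iff hA, neg_add_eq_zero, eq_comm]
  rw [hAr]
  refine and_congr_left fun hr => ?_
  rw [hr, Matrix.mul_assoc, neg_mulVec, ← mulVec_mulVec _ W⁻¹, ← mulVec_neg, ← mulVec_add,
    eq_inv_mulVec_iff hW, mulVec_mulVec, eq_neg_add_iff_add_eq, add_comm]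

theorem stmt0_general (n m : ℕ) (T : ℝ)
    (A : Matrix (Fin m) (Fin m) ℝ) (hA : A.PosDef)
    (W : Matrix (Fin n) (Fin n) ℝ) (hW : IsUnit W)
    (B : Matrix (Fin n) (Fin m) ℝ)
    (F : ℝ → (Fin n → ℝ)) (hF : ContinuousOn F (Icc 0 T))
    (C₀ : Fin n → ℝ) :
    ∃ (C D : ℝ → (Fin n → ℝ)) (R : ℝ → (Fin m → ℝ)),
      ContinuousOn D (Icc 0 T) ∧ ContinuousOn R (Icc 0 T) ∧
      (∀ t ∈ Icc 0 T, HasDerivAt C (D t) t) ∧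
      (∀ t ∈ Icc 0 T, W.mulVec (D t) + B.mulVec (R t) = F t) ∧
      (∀ t ∈ Icc 0 T, -(Bᵀ.mulVec (C t)) + A.mulVec (R t) = 0) ∧
      C 0 = C₀ ∧
      (∀ (C₁ D₁ : ℝ → (Fin n → ℝ)) (R₁ : ℝ → (Fin m → ℝ)),
        ContinuousOn D₁ (Icc 0 T) → ContinuousOn R₁ (Icc 0 T) →
        (∀ t ∈ Icc 0 T, HasDerivAt C₁ (D₁ t) t) →
        (∀ t ∈ Icc 0 T, W.mulVec (D₁ t) + B.mulVec (R₁ t) = F t) →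
        (∀ t ∈ Icc 0 T, -(Bᵀ.mulVec (C₁ t)) + A.mulVec (R₁ t) = 0) →
        C₁ 0 = C₀ →
        ∀ t ∈ Icc 0 T, C₁ t = C t ∧ R₁ t = R t) := by
  -- `HasDerivAt` is two-sided also at `0` and `T`, so the ODE is solved on all of `ℝ`.
  obtain ⟨G, hG, hGF⟩ := hF.exists_continuous_eqOn isClosed_Icc
  let S := A⁻¹ * Bᵀ
  let M : (Fin n → ℝ) →L[ℝ] (Fin n → ℝ) := (toLin' (-(W⁻¹ * B * S))).toContinuousLinearMap
  let g : ℝ → (Fin n → ℝ) := fun t => W⁻¹ *ᵥ G t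
  have hg : Continuous g := continuous_const.matrix_mulVec hG
  have hsys : ∀ t ∈ Icc 0 T, ∀ c d r, (W *ᵥ d + B *ᵥ r = F t ∧ -(Bᵀ *ᵥ c) + A *ᵥ r = 0) ↔
      d = M c + g t ∧ r = S *ᵥ c := fun t ht c d r => by
    rw [← hGF ht, mixed_system_iff hA.isUnit hW]
    rfl
  obtain ⟨C, hC0, hC⟩ := exists_hasDerivAt_clm_apply_add M hg C₀
  have hCc : Continuous C := continuous_iff_continuousAt.2 fun t => (hC t).continuousAt
  refine ⟨C, fun t => M (C t) + g t, fun t => S *ᵥ C t,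
    ((M.continuous.comp hCc).add hg).continuousOn,
    (continuous_const.matrix_mulVec hCc).continuousOn, fun t _ => hC t,
    fun t ht => ((hsys t ht _ _ _).2 ⟨rfl, rfl⟩).1,
    fun t ht => ((hsys t ht _ _ _).2 ⟨rfl, rfl⟩).2, hC0, ?_⟩
  intro C₁ D₁ R₁ _ _ hC₁ hW₁ hA₁ hC₁0
  have hDR₁ : ∀ t ∈ Icc 0 T, D₁ t = M (C₁ t) + g t ∧ R₁ t = S *ᵥ C₁ t :=
    fun t ht => (hsys t ht _ _ _).1 ⟨hW₁ t ht, hA₁ t ht⟩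
  have hCC : EqOn C₁ C (Icc 0 T) := eqOn_Icc_of_hasDerivAt_clm_apply_add M g
    (fun t ht => (hDR₁ t ht).1 ▸ hC₁ t ht) (fun t _ => hC t) (hC₁0.trans hC0.symm)
  exact fun t ht => ⟨hCC ht, by rw [(hDR₁ t ht).2, hCC ht]⟩

/-- Well-posedness of the finite-dimensional differential-algebraic Galerkin system:
`W C' + B R = F`, `-Bᵀ C + A R = 0`, `C 0 = C₀`, with `A` symmetric positive definite
and `W` invertible, `F` continuous on `[0,T]`. There is a unique continuously
differentiable `C` and unique continuous `R` on `[0,T]` solving the system. -/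
theorem stmt0 (n m : ℕ) (T : ℝ) (hT : 0 < T)
    (A : Matrix (Fin m) (Fin m) ℝ) (hA : A.PosDef)
    (W : Matrix (Fin n) (Fin n) ℝ) (hW : IsUnit W)
    (B : Matrix (Fin n) (Fin m) ℝ)
    (F : ℝ → (Fin n → ℝ)) (hF : ContinuousOn F (Icc 0 T))
    (C₀ : Fin n → ℝ) :
    ∃ (C D : ℝ → (Fin n → ℝ)) (R : ℝ → (Fin m → ℝ)),
      ContinuousOn D (Icc 0 T) ∧ ContinuousOn R (Icc 0 T) ∧
      (∀ t ∈ Icc 0 T, HasDerivAt C (D t) t) ∧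
      (∀ t ∈ Icc 0 T, W.mulVec (D t) + B.mulVec (R t) = F t) ∧
      (∀ t ∈ Icc 0 T, -(Bᵀ.mulVec (C t)) + A.mulVec (R t) = 0) ∧
      C 0 = C₀ ∧
      (∀ (C₁ D₁ : ℝ → (Fin n → ℝ)) (R₁ : ℝ → (Fin m → ℝ)),
        ContinuousOn D₁ (Icc 0 T) → ContinuousOn R₁ (Icc 0 T) →
        (∀ t ∈ Icc 0 T, HasDerivAt C₁ (D₁ t) t) →
        (∀ t ∈ Icc 0 T, W.mulVec (D₁ t) + B.mulVec (R₁ t) = F t) →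
        (∀ t ∈ Icc 0 T, -(Bᵀ.mulVec (C₁ t)) + A.mulVec (R₁ t) = 0) →
        C₁ 0 = C₀ →
        ∀ t ∈ Icc 0 T, C₁ t = C t ∧ R₁ t = R t) :=
  stmt0_general n m T A hA W hW B F hF C₀
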